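/- arXiv:2412.17622 — 4 statements merged into one kernel-verified Lean document; each statement's English description precedes it below -/
import Mathlib

section
/- Fix a probability vector α and sample-size vector (n_1,…,n_m) with each n_i ≥ 1. Let x = (x_{i,a})_{i ∈ [m], a ∈ [n_i]} be any points in X, and let x̃ be identical to x except that one entry x_{i,a} is changed to x̃_{i,a} ∈ X. Then |L̂(α; x̃) − L̂(α; x)| ≤ (α_i / n_i) Δ_L. -/
/-!
Both parts of `L̂(α; x)` are averages over the samples: giving sample `x_{j,b}` the weight
`w_{j,b} = α_j / n_j`, the loss is `∑ w_s w_t κ(x_s, x_t) + ∑ w_s f(x_s)` with `∑ w ≤ 1`.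
Changing the sample `p` alters only the summands in row `p` or column `p` of the quadratic part,
each by at most `Δ_κ`, which costs at most `2 w_p Δ_κ ∑ w ≤ 2 w_p Δ_κ`, and alters the linear
part by at most `w_p Δ_f`.
-/

open Finset

noncomputable section

/-- Empirical kernel matrix `K̂(x)_{ij} = (1/(n_i n_j)) ∑_a ∑_b κ(x_{i,a}, x_{j,b})`. -/
def Khat {X : Type*} (κ : X → X → ℝ) {m : ℕ} (n : Fin m → ℕ)
    (x : (i : Fin m) → Fin (n i) → X) (i j : Fin m) : ℝ :=
  (1 / ((n i : ℝ) * (n j : ℝ))) * ∑ a, ∑ b, κ (x i a) (x j b)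

/-- Empirical mean vector `f̂(x)_i = (1/n_i) ∑_a f(x_{i,a})`. -/
def fhat {X : Type*} (f : X → ℝ) {m : ℕ} (n : Fin m → ℕ)
    (x : (i : Fin m) → Fin (n i) → X) (i : Fin m) : ℝ :=
  (1 / (n i : ℝ)) * ∑ a, f (x i a)

/-- Sample loss `L̂(α; x) = αᵀ K̂(x) α + f̂(x)ᵀ α`. -/
def Lhat {X : Type*} (κ : X → X → ℝ) (f : X → ℝ) {m : ℕ} (n : Fin m → ℕ)
    (α : Fin m → ℝ) (x : (i : Fin m) → Fin (n i) → X) : ℝ :=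
  ∑ i, ∑ j, α i * α j * Khat κ n x i j + ∑ i, α i * fhat f n x i

lemma abs_sub_le_of_mem_Icc {u v a b : ℝ} (hu : u ∈ Set.Icc a b) (hv : v ∈ Set.Icc a b) :
    |u - v| ≤ b - a :=
  Real.dist_eq u v ▸ Real.dist_le_of_mem_Icc hu hv

def weightedLoss {ι X : Type*} [Fintype ι] (κ : X → X → ℝ) (f : X → ℝ) (w : ι → ℝ) (y : ι → X) :
    ℝ :=
  ∑ s, ∑ t, w s * w t * κ (y s) (y t) + ∑ s, w s * f (y s)

section WeightedLoss

variable {ι X : Type*} [Fintype ι] {κ : X → X → ℝ} {f : X → ℝ} {κ0 κ1 f0 f1 : ℝ}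
  {w : ι → ℝ} {y y' : ι → X} {p : ι}

lemma abs_quadratic_sub_le (hκ : ∀ u v, κ u v ∈ Set.Icc κ0 κ1) (hw : ∀ s, 0 ≤ w s)
    (hw1 : ∑ s, w s ≤ 1) (hy : ∀ s ≠ p, y' s = y s) :
    |∑ s, ∑ t, w s * w t * κ (y' s) (y' t) - ∑ s, ∑ t, w s * w t * κ (y s) (y t)|
      ≤ 2 * w p * (κ1 - κ0) := by
  classical
  have hΔ : 0 ≤ κ1 - κ0 := sub_nonneg.2 ((hκ (y p) (y p)).1.trans (hκ (y p) (y p)).2)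
  have hterm : ∀ s t, |κ (y' s) (y' t) - κ (y s) (y t)|
      ≤ ((if s = p then 1 else 0) + (if t = p then 1 else 0)) * (κ1 - κ0) := by
    intro s t
    by_cases h : s = p ∨ t = p
    · refine (abs_sub_le_of_mem_Icc (hκ _ _) (hκ _ _)).trans (le_mul_of_one_le_left hΔ ?_)
      rcases h with rfl | rfl <;> simp <;> split_ifs <;> norm_num
    · rw [not_or] at h
      simp [h.1, h.2, hy s h.1, hy t h.2]
  calc |∑ s, ∑ t, w s * w t * κ (y' s) (y' t) - ∑ s, ∑ t, w s * w t * κ (y s) (y t)|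
      = |∑ s, ∑ t, w s * w t * (κ (y' s) (y' t) - κ (y s) (y t))| := by
        simp only [mul_sub, sum_sub_distrib]
    _ ≤ ∑ s, ∑ t, w s * w t *
          (((if s = p then 1 else 0) + (if t = p then 1 else 0)) * (κ1 - κ0)) := by
        refine (abs_sum_le_sum_abs _ _).trans (sum_le_sum fun s _ => ?_)
        refine (abs_sum_le_sum_abs _ _).trans (sum_le_sum fun t _ => ?_)
        rw [abs_mul, abs_of_nonneg (mul_nonneg (hw s) (hw t))]
        exact mul_le_mul_of_nonneg_left (hterm s t) (mul_nonneg (hw s) (hw t))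
    _ = 2 * w p * (∑ s, w s) * (κ1 - κ0) := by
        simp only [mul_add, add_mul, mul_ite, ite_mul, mul_zero, zero_mul,
          sum_add_distrib, sum_ite_irrel, sum_const_zero, sum_ite_eq', mem_univ, if_true]
        rw [← sum_mul, ← sum_mul, ← mul_sum, ← sum_mul]
        ring
    _ ≤ 2 * w p * (κ1 - κ0) :=
        mul_le_mul_of_nonneg_right (mul_le_of_le_one_right (by linarith [hw p]) hw1) hΔ

lemma abs_linear_sub_le (hf : ∀ u, f u ∈ Set.Icc f0 f1) (hwp : 0 ≤ w p)
    (hy : ∀ s ≠ p, y' s = y s) :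
    |∑ s, w s * f (y' s) - ∑ s, w s * f (y s)| ≤ w p * (f1 - f0) := by
  rw [← sum_sub_distrib, sum_eq_single p (fun s _ hs => by rw [hy s hs, sub_self])
    (fun h => absurd (mem_univ p) h), ← mul_sub, abs_mul, abs_of_nonneg hwp]
  exact mul_le_mul_of_nonneg_left (abs_sub_le_of_mem_Icc (hf _) (hf _)) hwp

theorem weightedLoss_sub_le (hκ : ∀ u v, κ u v ∈ Set.Icc κ0 κ1) (hf : ∀ u, f u ∈ Set.Icc f0 f1)
    (hw : ∀ s, 0 ≤ w s) (hw1 : ∑ s, w s ≤ 1) (hy : ∀ s ≠ p, y' s = y s) :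
    |weightedLoss κ f w y' - weightedLoss κ f w y| ≤ w p * (2 * (κ1 - κ0) + (f1 - f0)) := by
  unfold weightedLoss
  have hq := abs_quadratic_sub_le hκ hw hw1 hy
  have hl := abs_linear_sub_le hf (hw p) hy
  calc _ ≤ |∑ s, ∑ t, w s * w t * κ (y' s) (y' t) - ∑ s, ∑ t, w s * w t * κ (y s) (y t)|
        + |∑ s, w s * f (y' s) - ∑ s, w s * f (y s)| := by
        rw [add_sub_add_comm]; exact abs_add_le _ _
    _ ≤ _ := by linarith

end WeightedLoss

section Samples

variable {X : Type*} {m : ℕ} {n : Fin m → ℕ}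

def sampleWeight (n : Fin m → ℕ) (α : Fin m → ℝ) (p : Σ j, Fin (n j)) : ℝ :=
  α p.1 / n p.1

lemma Lhat_eq_weightedLoss (κ : X → X → ℝ) (f : X → ℝ) (α : Fin m → ℝ)
    (x : (i : Fin m) → Fin (n i) → X) :
    Lhat κ f n α x = weightedLoss κ f (sampleWeight n α) (fun p => x p.1 p.2) := by
  simp only [Lhat, Khat, fhat, weightedLoss, sampleWeight, Fintype.sum_sigma, mul_sum]
  congr 1
  · refine sum_congr rfl fun j _ => ?_
    rw [sum_comm]
    exact sum_congr rfl fun b _ => sum_congr rfl fun k _ => sum_congr rfl fun c _ => by ring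
  · exact sum_congr rfl fun j _ => sum_congr rfl fun b _ => by ring

lemma sum_sampleWeight_le {α : Fin m → ℝ} (hα : ∀ j, 0 ≤ α j) :
    ∑ p, sampleWeight n α p ≤ ∑ j, α j := by
  rw [Fintype.sum_sigma]
  refine sum_le_sum fun j _ => ?_
  simp only [sampleWeight, sum_const, card_univ, Fintype.card_fin, nsmul_eq_mul]
  rcases (n j).eq_zero_or_pos with h | h
  · simp [h, hα j]
  · rw [mul_div_cancel₀ _ (by positivity)]

end Samples

theorem lhat_bounded_difference_general
    {X : Type*} {m : ℕ}
    (κ : X → X → ℝ) (f : X → ℝ)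
    (κ0 κ1 f0 f1 : ℝ)
    (hκbdd : ∀ x y, κ x y ∈ Set.Icc κ0 κ1) (hfbdd : ∀ y, f y ∈ Set.Icc f0 f1)
    (n : Fin m → ℕ)
    (α : Fin m → ℝ) (hα : α ∈ stdSimplex ℝ (Fin m))
    (x xt : (i : Fin m) → Fin (n i) → X)
    (i : Fin m) (a : Fin (n i))
    (hsame : ∀ (j : Fin m) (b : Fin (n j)),
      (⟨j, b⟩ : Σ j : Fin m, Fin (n j)) ≠ ⟨i, a⟩ → xt j b = x j b) :
    |Lhat κ f n α xt - Lhat κ f n α x| ≤ (α i / (n i : ℝ)) * (2 * (κ1 - κ0) + (f1 - f0)) := by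
  obtain ⟨hα0, hα1⟩ := hα
  have hw : ∀ p, 0 ≤ sampleWeight n α p := fun p => div_nonneg (hα0 p.1) (Nat.cast_nonneg _)
  have hw1 : ∑ p, sampleWeight n α p ≤ 1 := (sum_sampleWeight_le hα0).trans hα1.le
  have hy : ∀ p ≠ (⟨i, a⟩ : Σ j, Fin (n j)), xt p.1 p.2 = x p.1 p.2 :=
    fun p hp => hsame p.1 p.2 hp
  rw [Lhat_eq_weightedLoss, Lhat_eq_weightedLoss]
  exact weightedLoss_sub_le hκbdd hfbdd hw hw1 hy

/-- Bounded-difference property of the sample loss: changing one sample `x_{i,a}` of arm `i`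
changes `L̂(α; ·)` by at most `(α_i / n_i) Δ_L`, where `Δ_L = 2Δ_κ + Δ_f`. -/
theorem lhat_bounded_difference
    {X : Type*} {m : ℕ}
    (κ : X → X → ℝ) (f : X → ℝ)
    (κ0 κ1 f0 f1 : ℝ)
    (hκbdd : ∀ x y, κ x y ∈ Set.Icc κ0 κ1) (hfbdd : ∀ y, f y ∈ Set.Icc f0 f1)
    (hκsymm : ∀ x y, κ x y = κ y x)
    (n : Fin m → ℕ) (hn : ∀ i, 1 ≤ n i)
    (α : Fin m → ℝ) (hα : α ∈ stdSimplex ℝ (Fin m))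
    (x xt : (i : Fin m) → Fin (n i) → X)
    (i : Fin m) (a : Fin (n i))
    (hsame : ∀ (j : Fin m) (b : Fin (n j)),
      (⟨j, b⟩ : Σ j : Fin m, Fin (n j)) ≠ ⟨i, a⟩ → xt j b = x j b) :
    |Lhat κ f n α xt - Lhat κ f n α x| ≤ (α i / (n i : ℝ)) * (2 * (κ1 - κ0) + (f1 - f0)) :=
  lhat_bounded_difference_general κ f κ0 κ1 f0 f1 hκbdd hfbdd n α hα x xt i a hsame
end
end

section
/- Fix a probability vector α. Suppose for each i ∈ [m] we have n_i ≥ 1 i.i.d. samples x_{i,1},…,x_{i,n_i} ~ P_i, independent across i. Then |L(α) − E[L̂(α; x)]| ≤ Δ_κ ∑_{i=1}^m α_i² / n_i. -/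
/-!
Only the diagonal terms `a = b` of `K̂(x)_{ii}` are biased: any other pair `(x_{i,a}, x_{j,b})`
consists of two independent samples with law `P_i ⊗ P_j`, so
`E K̂_{ij} = K_{ij} + [i = j] (E_{P_i} κ(X, X) - K_{ii}) / n_i`, while `f̂` is unbiased. Hence
`L(α) - E L̂(α; x) = ∑ α_i² (K_{ii} - E_{P_i} κ(X, X)) / n_i`, and both `K_{ii}` and
`E_{P_i} κ(X, X)` lie in `[κ₀, κ₁]`.
-/

open MeasureTheory Finset

noncomputable section

/-- Population kernel matrix `K_{ij} = E_{X ~ P_i, X' ~ P_j}[κ(X, X')]`. -/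
def Kpop {X : Type*} [MeasurableSpace X] {m : ℕ} (P : Fin m → Measure X)
    (κ : X → X → ℝ) (i j : Fin m) : ℝ :=
  ∫ p, κ p.1 p.2 ∂((P i).prod (P j))

/-- Population mean vector `f_i = E_{P_i}[f]`. -/
def fpop {X : Type*} [MeasurableSpace X] {m : ℕ} (P : Fin m → Measure X)
    (f : X → ℝ) (i : Fin m) : ℝ :=
  ∫ y, f y ∂(P i)

/-- Population loss `L(α) = αᵀ K α + fᵀ α`. -/
def Lpop {X : Type*} [MeasurableSpace X] {m : ℕ} (P : Fin m → Measure X)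
    (κ : X → X → ℝ) (f : X → ℝ) (α : Fin m → ℝ) : ℝ :=
  ∑ i, ∑ j, α i * α j * Kpop P κ i j + ∑ i, α i * fpop P f i

/-- The joint law of independent samples, `n i` i.i.d. samples from `P i` for each arm `i`. -/
def sampleMeasure {X : Type*} [MeasurableSpace X] {m : ℕ} (P : Fin m → Measure X)
    (n : Fin m → ℕ) : Measure ((i : Fin m) → Fin (n i) → X) :=
  Measure.pi fun i => Measure.pi fun _ => P i

open ProbabilityTheory

lemma integral_mem_Icc_of_ae_mem {Ω : Type*} [MeasurableSpace Ω] {μ : Measure Ω}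
    [IsProbabilityMeasure μ] {g : Ω → ℝ} {a b : ℝ} (hg : AEMeasurable g μ)
    (h : ∀ᵐ ω ∂μ, g ω ∈ Set.Icc a b) : ∫ ω, g ω ∂μ ∈ Set.Icc a b := by
  have hint : Integrable g μ := .of_mem_Icc a b hg h
  constructor
  · simpa using integral_mono_ae (integrable_const a) hint (h.mono fun _ hω => hω.1)
  · simpa using integral_mono_ae hint (integrable_const b) (h.mono fun _ hω => hω.2)

lemma ProbabilityTheory.hasLaw_eval_prod_eval_pi {ι : Type*} [Fintype ι] {Y : ι → Type*}
    [∀ i, MeasurableSpace (Y i)] (μ : (i : ι) → Measure (Y i))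
    [∀ i, IsProbabilityMeasure (μ i)] {i j : ι} (hij : i ≠ j) :
    HasLaw (fun y => (y i, y j)) ((μ i).prod (μ j)) (Measure.pi μ) :=
  ((iIndepFun_pi (X := fun _ => id) fun _ => aemeasurable_id).indepFun hij).hasLaw_prod
    (measurePreserving_eval μ i).hasLaw (measurePreserving_eval μ j).hasLaw

section Sampling

variable {X : Type*} [MeasurableSpace X] {m : ℕ} {P : Fin m → Measure X}
  [∀ i, IsProbabilityMeasure (P i)] {n : Fin m → ℕ}

instance : IsProbabilityMeasure (sampleMeasure P n) := by
  unfold sampleMeasure; infer_instance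

lemma hasLaw_sample_block (i : Fin m) :
    HasLaw (fun x => x i) (Measure.pi fun _ : Fin (n i) => P i) (sampleMeasure P n) :=
  (measurePreserving_eval (fun i => Measure.pi fun _ : Fin (n i) => P i) i).hasLaw

lemma hasLaw_sample_eval (i : Fin m) (a : Fin (n i)) :
    HasLaw (fun x => x i a) (P i) (sampleMeasure P n) :=
  (measurePreserving_eval _ a).comp_hasLaw (hasLaw_sample_block i)

lemma hasLaw_sample_pair_of_ne {i j : Fin m} (hij : i ≠ j) (a : Fin (n i)) (b : Fin (n j)) :
    HasLaw (fun x => (x i a, x j b)) ((P i).prod (P j)) (sampleMeasure P n) :=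
  ((measurePreserving_eval _ a).prod (measurePreserving_eval _ b)).comp_hasLaw
    (hasLaw_eval_prod_eval_pi (fun i => Measure.pi fun _ : Fin (n i) => P i) hij)

lemma hasLaw_sample_pair_same (i : Fin m) {a b : Fin (n i)} (hab : a ≠ b) :
    HasLaw (fun x => (x i a, x i b)) ((P i).prod (P i)) (sampleMeasure P n) :=
  (hasLaw_eval_prod_eval_pi _ hab).comp (hasLaw_sample_block i)

end Sampling

section Expectation

variable {X : Type*} [MeasurableSpace X] {m : ℕ} {P : Fin m → Measure X}
  [∀ i, IsProbabilityMeasure (P i)] {n : Fin m → ℕ} {κ : X → X → ℝ} {f : X → ℝ}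

lemma integrable_sample_kernel {κ0 κ1 : ℝ} (hκ : Measurable (Function.uncurry κ))
    (hκb : ∀ x y, κ x y ∈ Set.Icc κ0 κ1) (i j : Fin m) (a : Fin (n i)) (b : Fin (n j)) :
    Integrable (fun x => κ (x i a) (x j b)) (sampleMeasure P n) :=
  .of_mem_Icc κ0 κ1 (by fun_prop) (ae_of_all _ fun _ => hκb _ _)

lemma integrable_sample_comp_eval {f0 f1 : ℝ} (hf : Measurable f)
    (hfb : ∀ y, f y ∈ Set.Icc f0 f1) (i : Fin m) (a : Fin (n i)) :
    Integrable (fun x => f (x i a)) (sampleMeasure P n) :=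
  .of_mem_Icc f0 f1 (hf.comp_aemeasurable (hasLaw_sample_eval i a).aemeasurable)
    (ae_of_all _ fun _ => hfb _)

lemma integral_sample_kernel_of_ne (hκ : Measurable (Function.uncurry κ)) {i j : Fin m}
    (hij : i ≠ j) (a : Fin (n i)) (b : Fin (n j)) :
    ∫ x, κ (x i a) (x j b) ∂sampleMeasure P n = Kpop P κ i j :=
  (hasLaw_sample_pair_of_ne hij a b).integral_comp hκ.aestronglyMeasurable

lemma integral_sample_kernel_same (hκ : Measurable (Function.uncurry κ)) (i : Fin m)
    (a b : Fin (n i)) :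
    ∫ x, κ (x i a) (x i b) ∂sampleMeasure P n =
      Kpop P κ i i + if a = b then (∫ y, κ y y ∂P i) - Kpop P κ i i else 0 := by
  rcases eq_or_ne a b with rfl | hab
  · rw [if_pos rfl, add_sub_cancel]
    exact (hasLaw_sample_eval i a).integral_comp (f := fun y => κ y y)
      (by fun_prop : Measurable fun y => κ y y).aestronglyMeasurable
  · rw [if_neg hab, add_zero]
    exact (hasLaw_sample_pair_same i hab).integral_comp hκ.aestronglyMeasurable

lemma integral_fhat {f0 f1 : ℝ} (hf : Measurable f) (hfb : ∀ y, f y ∈ Set.Icc f0 f1)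
    {i : Fin m} (hni : n i ≠ 0) : ∫ x, fhat f n x i ∂sampleMeasure P n = fpop P f i := by
  have hlaw (a : Fin (n i)) : ∫ x, f (x i a) ∂sampleMeasure P n = fpop P f i :=
    (hasLaw_sample_eval i a).integral_comp hf.aestronglyMeasurable
  simp only [fhat]
  rw [integral_const_mul, integral_finsetSum _ fun a _ =>
    integrable_sample_comp_eval (P := P) hf hfb i a]
  simp only [hlaw, sum_const, card_univ, Fintype.card_fin, nsmul_eq_mul]
  field_simp

lemma integral_Khat {κ0 κ1 : ℝ} (hκ : Measurable (Function.uncurry κ))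
    (hκb : ∀ x y, κ x y ∈ Set.Icc κ0 κ1) {i j : Fin m} (hni : n i ≠ 0) (hnj : n j ≠ 0) :
    ∫ x, Khat κ n x i j ∂sampleMeasure P n =
      Kpop P κ i j + if i = j then ((∫ y, κ y y ∂P i) - Kpop P κ i i) / n i else 0 := by
  have hint := integrable_sample_kernel (P := P) (n := n) hκ hκb i j
  have hlin : ∫ x, Khat κ n x i j ∂sampleMeasure P n =
      1 / ((n i : ℝ) * n j) * ∑ a, ∑ b, ∫ x, κ (x i a) (x j b) ∂sampleMeasure P n := by
    simp only [Khat]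
    rw [integral_const_mul, integral_finsetSum _ fun a _ => integrable_finsetSum _ fun b _ =>
      hint a b]
    simp only [integral_finsetSum _ fun b _ => hint _ b]
  rw [hlin]
  rcases eq_or_ne i j with rfl | hij
  · simp only [integral_sample_kernel_same hκ, sum_add_distrib, sum_ite_eq, mem_univ, if_true,
      sum_const, card_univ, Fintype.card_fin, nsmul_eq_mul]
    field_simp
  · simp only [integral_sample_kernel_of_ne hκ hij, hij, if_false, add_zero, sum_const, card_univ,
      Fintype.card_fin, nsmul_eq_mul]
    field_simp

lemma integral_Lhat {κ0 κ1 f0 f1 : ℝ} (hκ : Measurable (Function.uncurry κ))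
    (hκb : ∀ x y, κ x y ∈ Set.Icc κ0 κ1) (hf : Measurable f)
    (hfb : ∀ y, f y ∈ Set.Icc f0 f1) (hn : ∀ i, n i ≠ 0) (α : Fin m → ℝ) :
    ∫ x, Lhat κ f n α x ∂sampleMeasure P n =
      Lpop P κ f α + ∑ i, α i ^ 2 * ((∫ y, κ y y ∂P i) - Kpop P κ i i) / n i := by
  have hK (i j : Fin m) : Integrable (fun x => α i * α j * Khat κ n x i j) (sampleMeasure P n) :=
    ((integrable_finsetSum _ fun a _ => integrable_finsetSum _ fun b _ =>
      integrable_sample_kernel hκ hκb i j a b).const_mul _).const_mul _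
  have hF (i : Fin m) : Integrable (fun x => α i * fhat f n x i) (sampleMeasure P n) :=
    ((integrable_finsetSum _ fun a _ =>
      integrable_sample_comp_eval hf hfb i a).const_mul _).const_mul _
  have hKK (i : Fin m) : Integrable (fun x => ∑ j, α i * α j * Khat κ n x i j)
      (sampleMeasure P n) :=
    integrable_finsetSum _ fun j _ => hK i j
  simp only [Lhat]
  rw [integral_add (integrable_finsetSum _ fun i _ => hKK i)
      (integrable_finsetSum _ fun i _ => hF i),
    integral_finsetSum _ fun i _ => hKK i, integral_finsetSum _ fun i _ => hF i]
  simp only [integral_finsetSum _ fun j _ => hK _ j, integral_const_mul,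
    integral_Khat hκ hκb (hn _) (hn _), integral_fhat hf hfb (hn _), Lpop, mul_add, mul_ite,
    mul_zero, sum_add_distrib, sum_ite_eq, mem_univ, if_true]
  ring_nf

lemma abs_integral_diag_sub_Kpop_le {κ0 κ1 : ℝ} (hκ : Measurable (Function.uncurry κ))
    (hκb : ∀ x y, κ x y ∈ Set.Icc κ0 κ1) (i : Fin m) :
    |(∫ y, κ y y ∂P i) - Kpop P κ i i| ≤ κ1 - κ0 := by
  have hdiag : (∫ y, κ y y ∂P i) ∈ Set.Icc κ0 κ1 :=
    integral_mem_Icc_of_ae_mem (by fun_prop : Measurable fun y => κ y y).aemeasurable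
      (ae_of_all _ fun y => hκb y y)
  have hK : Kpop P κ i i ∈ Set.Icc κ0 κ1 :=
    integral_mem_Icc_of_ae_mem hκ.aemeasurable (ae_of_all _ fun p => hκb p.1 p.2)
  exact abs_sub_le_iff.2 ⟨by linarith [hdiag.2, hK.1], by linarith [hdiag.1, hK.2]⟩

end Expectation

theorem lhat_bias_bound_general
    {X : Type*} [MeasurableSpace X] {m : ℕ}
    (P : Fin m → Measure X) (hP : ∀ i, IsProbabilityMeasure (P i))
    (κ : X → X → ℝ) (f : X → ℝ)
    (hκmeas : Measurable (Function.uncurry κ)) (hfmeas : Measurable f)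
    (κ0 κ1 f0 f1 : ℝ)
    (hκbdd : ∀ x y, κ x y ∈ Set.Icc κ0 κ1) (hfbdd : ∀ y, f y ∈ Set.Icc f0 f1)
    (n : Fin m → ℕ) (hn : ∀ i, 1 ≤ n i)
    (α : Fin m → ℝ) :
    |Lpop P κ f α - ∫ x, Lhat κ f n α x ∂(sampleMeasure P n)| ≤
      (κ1 - κ0) * ∑ i, α i ^ 2 / (n i : ℝ) := by
  have hn₀ (i : Fin m) : n i ≠ 0 := Nat.one_le_iff_ne_zero.mp (hn i)
  rw [integral_Lhat hκmeas hκbdd hfmeas hfbdd hn₀ α, sub_add_cancel_left, abs_neg, mul_sum]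
  refine (abs_sum_le_sum_abs _ _).trans (sum_le_sum fun i _ => ?_)
  calc |α i ^ 2 * ((∫ y, κ y y ∂P i) - Kpop P κ i i) / n i|
      = α i ^ 2 / n i * |(∫ y, κ y y ∂P i) - Kpop P κ i i| := by
        rw [abs_div, abs_mul, abs_sq, Nat.abs_cast]; ring
    _ ≤ α i ^ 2 / n i * (κ1 - κ0) := by
        gcongr; exact abs_integral_diag_sub_Kpop_le hκmeas hκbdd i
    _ = (κ1 - κ0) * (α i ^ 2 / n i) := mul_comm _ _

/-- Bias bound: `|L(α) − E[L̂(α;x)]| ≤ Δ_κ ∑_i α_i² / n_i`. -/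
theorem lhat_bias_bound
    {X : Type*} [MeasurableSpace X] {m : ℕ}
    (P : Fin m → Measure X) (hP : ∀ i, IsProbabilityMeasure (P i))
    (κ : X → X → ℝ) (f : X → ℝ)
    (hκmeas : Measurable (Function.uncurry κ)) (hfmeas : Measurable f)
    (κ0 κ1 f0 f1 : ℝ)
    (hκbdd : ∀ x y, κ x y ∈ Set.Icc κ0 κ1) (hfbdd : ∀ y, f y ∈ Set.Icc f0 f1)
    (hκsymm : ∀ x y, κ x y = κ y x)
    (n : Fin m → ℕ) (hn : ∀ i, 1 ≤ n i)
    (α : Fin m → ℝ) (hα : α ∈ stdSimplex ℝ (Fin m)) :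
    |Lpop P κ f α - ∫ x, Lhat κ f n α x ∂(sampleMeasure P n)| ≤
      (κ1 - κ0) * ∑ i, α i ^ 2 / (n i : ℝ) :=
  lhat_bias_bound_general P hP κ f hκmeas hfmeas κ0 κ1 f0 f1 hκbdd hfbdd n hn α
end
end

section
/- Fix n_1,…,n_m ≥ 1, δ > 0, and samples x. Suppose that (i) for every i ∈ [m], f_i + K_{ii} − f̂_i(x) − K̂_{ii}(x) ≤ Δ_L √(log(1/δ)/(2 n_i)) + Δ_κ/n_i, and (ii) for every i ≠ j, (f_i + f_j)/2 + K_{ij} − (f̂_i(x) + f̂_j(x))/2 − K̂_{ij}(x) ≤ Δ_L √( (log(1/δ)/8)(n_i^{-1} + n_j^{-1}) ). Then for every probability vector α, L(α) − L̂(α; x) ≤ ∑_{i=1}^m ( Δ_L √(log(1/δ)/(2 n_i)) + Δ_κ/n_i ) α_i. -/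
open MeasureTheory Finset

noncomputable section

/-! On the simplex the linear term can be symmetrized, `fᵀ α = ∑ i j, α i α j (f i + f j) / 2`,
so `L(α) − L̂(α; x)` is the quadratic form in `α` of the pairwise deviations
`(f i + f j) / 2 + K i j − (f̂ i + f̂ j) / 2 − K̂ i j`. Each of these is at most `(B i + B j) / 2`,
where `B i` is the diagonal bound (off the diagonal by `√(u + v) ≤ √u + √v`), and
`∑ i j, α i α j (B i + B j) / 2 = ∑ i, B i α i`. -/

theorem Real.sqrt_add_le_add_sqrt (x y : ℝ) : √(x + y) ≤ √x + √y := by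
  rw [Real.sqrt_le_left (by positivity)]
  nlinarith [Real.sq_sqrt' (x := x), Real.sq_sqrt' (x := y), le_max_left x 0, le_max_left y 0,
    mul_nonneg (Real.sqrt_nonneg x) (Real.sqrt_nonneg y)]

theorem Real.sqrt_mul_inv_add_inv_le (c a b : ℝ) :
    √(c / 8 * (a⁻¹ + b⁻¹)) ≤ (√(c / (2 * a)) + √(c / (2 * b))) / 2 := by
  have sqrt_four : √(4 : ℝ) = 2 := by
    rw [show (4 : ℝ) = 2 ^ 2 by norm_num, Real.sqrt_sq zero_le_two]
  calc √(c / 8 * (a⁻¹ + b⁻¹)) = √(c / (2 * a) + c / (2 * b)) / 2 := by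
        rw [show c / 8 * (a⁻¹ + b⁻¹) = (c / (2 * a) + c / (2 * b)) / 4 by ring,
          Real.sqrt_div' _ zero_le_four, sqrt_four]
    _ ≤ (√(c / (2 * a)) + √(c / (2 * b))) / 2 := by
        gcongr; exact Real.sqrt_add_le_add_sqrt _ _

section QuadraticForm

variable {ι : Type*} [Fintype ι] {α : ι → ℝ}

theorem sum_sum_mul_mul_half_add (hα : ∑ i, α i = 1) (g : ι → ℝ) :
    ∑ i, ∑ j, α i * α j * ((g i + g j) / 2) = ∑ i, α i * g i := by
  calc ∑ i, ∑ j, α i * α j * ((g i + g j) / 2)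
      = ((∑ i, α i * g i) * ∑ j, α j + (∑ i, α i) * ∑ j, α j * g j) / 2 := by
        rw [sum_mul_sum, sum_mul_sum, ← sum_add_distrib, sum_div]
        refine sum_congr rfl fun i _ => ?_
        rw [← sum_add_distrib, sum_div]
        exact sum_congr rfl fun j _ => by ring
    _ = ∑ i, α i * g i := by rw [hα]; ring

theorem sum_sum_mul_add_sum_mul_eq (hα : ∑ i, α i = 1) (K : ι → ι → ℝ) (f : ι → ℝ) :
    ∑ i, ∑ j, α i * α j * K i j + ∑ i, α i * f i =
      ∑ i, ∑ j, α i * α j * ((f i + f j) / 2 + K i j) := by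
  simp only [mul_add, sum_add_distrib, sum_sum_mul_mul_half_add hα]
  ring

theorem sum_sum_mul_le_sum_mul (hα : α ∈ stdSimplex ℝ ι) {D : ι → ι → ℝ} {B : ι → ℝ}
    (hDB : ∀ i j, D i j ≤ (B i + B j) / 2) :
    ∑ i, ∑ j, α i * α j * D i j ≤ ∑ i, B i * α i :=
  calc ∑ i, ∑ j, α i * α j * D i j ≤ ∑ i, ∑ j, α i * α j * ((B i + B j) / 2) :=
        sum_le_sum fun i _ => sum_le_sum fun j _ =>
          mul_le_mul_of_nonneg_left (hDB i j) (mul_nonneg (hα.1 i) (hα.1 j))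
    _ = ∑ i, B i * α i := by simp only [sum_sum_mul_mul_half_add hα.2, mul_comm]

theorem quadratic_loss_sub_le (hα : α ∈ stdSimplex ℝ ι) {K K' : ι → ι → ℝ} {f f' B : ι → ℝ}
    (h : ∀ i j, (f i + f j) / 2 + K i j - (f' i + f' j) / 2 - K' i j ≤ (B i + B j) / 2) :
    (∑ i, ∑ j, α i * α j * K i j + ∑ i, α i * f i) -
        (∑ i, ∑ j, α i * α j * K' i j + ∑ i, α i * f' i) ≤ ∑ i, B i * α i := by
  rw [sum_sum_mul_add_sum_mul_eq hα.2, sum_sum_mul_add_sum_mul_eq hα.2]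
  simp only [← sum_sub_distrib, ← mul_sub]
  exact sum_sum_mul_le_sum_mul hα fun i j => by linarith [h i j]

end QuadraticForm

theorem deviation_combination_general
    {X : Type*} [MeasurableSpace X] {m : ℕ}
    (P : Fin m → Measure X)
    (κ : X → X → ℝ) (f : X → ℝ)
    (κ0 κ1 f0 f1 : ℝ)
    (hκbdd : ∀ x y, κ x y ∈ Set.Icc κ0 κ1) (hfbdd : ∀ y, f y ∈ Set.Icc f0 f1)
    (n : Fin m → ℕ) (hn : ∀ i, 1 ≤ n i)
    (δ : ℝ)
    (x : (i : Fin m) → Fin (n i) → X)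
    (hdiag : ∀ i : Fin m,
      fpop P f i + Kpop P κ i i - fhat f n x i - Khat κ n x i i ≤
        (2 * (κ1 - κ0) + (f1 - f0)) * Real.sqrt (Real.log (1 / δ) / (2 * (n i : ℝ)))
          + (κ1 - κ0) / (n i : ℝ))
    (hoff : ∀ i j : Fin m, i ≠ j →
      (fpop P f i + fpop P f j) / 2 + Kpop P κ i j
          - (fhat f n x i + fhat f n x j) / 2 - Khat κ n x i j ≤
        (2 * (κ1 - κ0) + (f1 - f0)) *
          Real.sqrt (Real.log (1 / δ) / 8 * ((n i : ℝ)⁻¹ + (n j : ℝ)⁻¹))) :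
    ∀ α ∈ stdSimplex ℝ (Fin m),
      Lpop P κ f α - Lhat κ f n α x ≤
        ∑ i, ((2 * (κ1 - κ0) + (f1 - f0)) * Real.sqrt (Real.log (1 / δ) / (2 * (n i : ℝ)))
          + (κ1 - κ0) / (n i : ℝ)) * α i := by
  intro α hα
  refine quadratic_loss_sub_le hα fun i j => ?_
  obtain rfl | hij := eq_or_ne i j
  · linarith [hdiag i]
  have y : X := x i ⟨0, hn i⟩
  have hκ : κ0 ≤ κ1 := Set.nonempty_Icc.1 ⟨_, hκbdd y y⟩
  have hf : f0 ≤ f1 := Set.nonempty_Icc.1 ⟨_, hfbdd y⟩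
  have hsqrt := mul_le_mul_of_nonneg_left (Real.sqrt_mul_inv_add_inv_le (Real.log (1 / δ))
    (n i) (n j)) (by linarith : 0 ≤ 2 * (κ1 - κ0) + (f1 - f0))
  have hκi : 0 ≤ (κ1 - κ0) / (n i : ℝ) := div_nonneg (sub_nonneg.2 hκ) (Nat.cast_nonneg _)
  have hκj : 0 ≤ (κ1 - κ0) / (n j : ℝ) := div_nonneg (sub_nonneg.2 hκ) (Nat.cast_nonneg _)
  linarith [hoff i j hij]

/-- Deterministic combination step: if the diagonal and off-diagonal deviation bounds hold
for the samples `x`, then for every probability vector `α`,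
`L(α) − L̂(α;x) ≤ ∑_i (Δ_L √(log(1/δ)/(2n_i)) + Δ_κ/n_i) α_i`. -/
theorem deviation_combination
    {X : Type*} [MeasurableSpace X] {m : ℕ}
    (P : Fin m → Measure X) (hP : ∀ i, IsProbabilityMeasure (P i))
    (κ : X → X → ℝ) (f : X → ℝ)
    (hκmeas : Measurable (Function.uncurry κ)) (hfmeas : Measurable f)
    (κ0 κ1 f0 f1 : ℝ)
    (hκbdd : ∀ x y, κ x y ∈ Set.Icc κ0 κ1) (hfbdd : ∀ y, f y ∈ Set.Icc f0 f1)
    (hκsymm : ∀ x y, κ x y = κ y x)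
    (n : Fin m → ℕ) (hn : ∀ i, 1 ≤ n i)
    (δ : ℝ) (hδ : 0 < δ)
    (x : (i : Fin m) → Fin (n i) → X)
    (hdiag : ∀ i : Fin m,
      fpop P f i + Kpop P κ i i - fhat f n x i - Khat κ n x i i ≤
        (2 * (κ1 - κ0) + (f1 - f0)) * Real.sqrt (Real.log (1 / δ) / (2 * (n i : ℝ)))
          + (κ1 - κ0) / (n i : ℝ))
    (hoff : ∀ i j : Fin m, i ≠ j →
      (fpop P f i + fpop P f j) / 2 + Kpop P κ i j
          - (fhat f n x i + fhat f n x j) / 2 - Khat κ n x i j ≤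
        (2 * (κ1 - κ0) + (f1 - f0)) *
          Real.sqrt (Real.log (1 / δ) / 8 * ((n i : ℝ)⁻¹ + (n j : ℝ)⁻¹))) :
    ∀ α ∈ stdSimplex ℝ (Fin m),
      Lpop P κ f α - Lhat κ f n α x ≤
        ∑ i, ((2 * (κ1 - κ0) + (f1 - f0)) * Real.sqrt (Real.log (1 / δ) / (2 * (n i : ℝ)))
          + (κ1 - κ0) / (n i : ℝ)) * α i :=
  deviation_combination_general P κ f κ0 κ1 f0 f1 hκbdd hfbdd n hn δ x hdiag hoff
end
end

section
/- Let m ≥ 1 and let n_1,…,n_m be positive integers with ∑_{i=1}^m n_i = T, where T ≥ 2m. Define ψ(n) := ∑_{k=1}^{n} k^{-1/2} (with ψ(0) = 0). Then ∑_{i=1}^m ψ(n_i − 1) ≤ m ( 2√(T/m − 1) − 1 ). -/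
/-!
Bound each `ψ(k)` by the tangent line at `c = T/m - 1` of the concave majorant
`a ↦ ∫₀^a min(τ^{-1/2}, 1) dτ`, which equals `2√a - 1` for `a ≥ 1`; the linear terms cancel after
summing because the `n_i - 1` average to `c`. For `k ≥ 1` this is `ψ(k) ≤ 2√k - 1` (telescoping
`k^{-1/2} ≤ 2(√k - √(k-1))`) followed by AM-GM; for `k = 0` it is `√c ≥ 1`.
-/

open Finset Real

noncomputable def psi (n : ℕ) : ℝ :=
  ∑ k ∈ Icc 1 n, (k : ℝ) ^ (-(1 : ℝ) / 2)

theorem rpow_neg_half_eq_inv_sqrt {x : ℝ} (hx : 0 ≤ x) : x ^ (-(1 : ℝ) / 2) = (√x)⁻¹ := by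
  rw [neg_div, rpow_neg hx, sqrt_eq_rpow]

theorem inv_sqrt_add_one_le {x : ℝ} (hx : 0 ≤ x) : (√(x + 1))⁻¹ ≤ 2 * (√(x + 1) - √x) := by
  have hpos : 0 < √(x + 1) := sqrt_pos.mpr (by linarith)
  rw [inv_le_iff_one_le_mul₀ hpos]
  -- `1 = (√(x+1) - √x)(√(x+1) + √x)`
  nlinarith [sq_sqrt hx, sq_sqrt (by linarith : 0 ≤ x + 1), sqrt_nonneg x]

theorem psi_succ (n : ℕ) : psi (n + 1) = psi n + (√(n + 1))⁻¹ := by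
  rw [psi, sum_Icc_succ_top (by omega), rpow_neg_half_eq_inv_sqrt (Nat.cast_nonneg _)]
  push_cast
  rfl

theorem psi_le_two_mul_sqrt_sub_one {n : ℕ} (hn : 1 ≤ n) : psi n ≤ 2 * √n - 1 := by
  induction n, hn using Nat.le_induction with
  | base => norm_num [psi]
  | succ n _ ih =>
    rw [psi_succ]
    push_cast
    linarith [inv_sqrt_add_one_le (Nat.cast_nonneg (α := ℝ) n)]

theorem two_mul_sqrt_le_tangent {x c : ℝ} (hx : 0 ≤ x) (hc : 0 < c) :
    2 * √x ≤ 2 * √c + (√c)⁻¹ * (x - c) := by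
  have hsc : 0 < √c := sqrt_pos.mpr hc
  have hamgm := two_mul_le_add_sq (√x) (√c)
  rw [sq_sqrt hx, sq_sqrt hc.le] at hamgm
  rw [← sub_le_iff_le_add', ← mul_sub, inv_mul_eq_div, le_div_iff₀ hsc]
  nlinarith [sq_sqrt hc.le]

theorem psi_le_tangent (n : ℕ) {c : ℝ} (hc : 1 ≤ c) :
    psi n ≤ (2 * √c - 1) + (√c)⁻¹ * (n - c) := by
  rcases Nat.eq_zero_or_pos n with rfl | hn
  · have hsc : 1 ≤ √c := one_le_sqrt.mpr hc
    rw [psi, Icc_eq_empty (by norm_num), sum_empty, Nat.cast_zero, zero_sub, mul_neg,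
      inv_mul_eq_div, div_sqrt]
    linarith
  · linarith [psi_le_two_mul_sqrt_sub_one hn,
      two_mul_sqrt_le_tangent (Nat.cast_nonneg (α := ℝ) n) (by linarith : 0 < c)]

theorem Finset.sum_le_card_mul_of_le_affine {ι : Type*} (s : Finset ι) (f x : ι → ℝ) {a b c : ℝ}
    (hf : ∀ i ∈ s, f i ≤ a + b * (x i - c)) (hx : ∑ i ∈ s, x i = #s * c) :
    ∑ i ∈ s, f i ≤ #s * a := by
  calc ∑ i ∈ s, f i ≤ ∑ i ∈ s, (a + b * (x i - c)) := sum_le_sum hf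
    _ = #s * a := by
      rw [sum_add_distrib, ← mul_sum, sum_sub_distrib, hx]
      simp

/-- With `ψ(n) = ∑_{k=1}^n k^{-1/2}`, if `n_1,…,n_m ≥ 1` sum to `T ≥ 2m`, then
`∑_i ψ(n_i − 1) ≤ m (2√(T/m − 1) − 1)`. -/
theorem sum_psi_le
    {m : ℕ} (hm : 1 ≤ m) (n : Fin m → ℕ) (hn : ∀ i, 1 ≤ n i)
    (T : ℕ) (hsum : ∑ i, n i = T) (hT : 2 * m ≤ T) :
    ∑ i, (∑ k ∈ Finset.Icc 1 (n i - 1), ((k : ℝ)) ^ (-(1 : ℝ) / 2)) ≤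
      (m : ℝ) * (2 * Real.sqrt ((T : ℝ) / (m : ℝ) - 1) - 1) := by
  have hm0 : (0 : ℝ) < m := by exact_mod_cast hm
  set c : ℝ := (T : ℝ) / m - 1
  have hc : 1 ≤ c := by
    rw [le_sub_iff_add_le, le_div_iff₀ hm0]
    exact_mod_cast (by omega : (1 + 1) * m ≤ T)
  have hmean : ∑ i, ((n i - 1 : ℕ) : ℝ) = #(univ : Finset (Fin m)) * c := by
    rw [card_univ, Fintype.card_fin, mul_sub, mul_div_cancel₀ _ hm0.ne', mul_one, ← hsum]
    push_cast [Nat.cast_sub (hn _), sum_sub_distrib]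
    simp
  change ∑ i, psi (n i - 1) ≤ _
  simpa using sum_le_card_mul_of_le_affine univ (fun i ↦ psi (n i - 1)) _
    (fun i _ ↦ psi_le_tangent (n i - 1) hc) hmean
end
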